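/- arXiv:math-ph/0308027 — 3 statements merged into one kernel-verified Lean document; each statement's English description precedes it below -/
import Mathlib

section
/- Let b be a nonzero complex number and let x_1, …, x_g : ℝ → ℂ be functions differentiable at a point u₀ with |x_i(u₀)| < |b| for every i. Set F(u) := ∏_{i=1}^g (b − x_i(u)) and q_n(u) := ∑_{i=1}^g x_i(u)^n. Then F(u₀) ≠ 0, each q_n is differentiable at u₀, the series ∑_{n=1}^∞ q_n′(u₀) / (n b^n) converges absolutely, and F′(u₀)/F(u₀) = − ∑_{n=1}^∞ q_n′(u₀) / (n b^n). -/
open Finset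

private lemma hasDerivAt_pow_comp {f : ℝ → ℂ} {f' : ℂ} {u₀ : ℝ}
    (h : HasDerivAt f f' u₀) (n : ℕ) :
    HasDerivAt (fun u => f u ^ (n + 1)) (((n : ℂ) + 1) * f u₀ ^ n * f') u₀ := by
  induction n with
  | zero => simpa using h
  | succ n ih =>
    have key : (((n : ℂ) + 1 + 1) * f u₀ ^ (n + 1) * f') =
        (((n : ℂ) + 1) * f u₀ ^ n * f') * f u₀ + f u₀ ^ (n + 1) * f' := by
      rw [pow_succ]; ring
    have H := ih.fun_mul h
    rw [show ((n : ℕ) + 1 + 1 : ℕ) = n + 2 from rfl] at *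
    push_cast
    rw [key]
    simpa [pow_succ] using H

theorem log_deriv_expansion_power_sums
    (g : ℕ) (b : ℂ) (hb : b ≠ 0) (x : Fin g → ℝ → ℂ) (u₀ : ℝ)
    (hdiff : ∀ i, DifferentiableAt ℝ (x i) u₀)
    (hx : ∀ i, ‖x i u₀‖ < ‖b‖) :
    (∏ i, (b - x i u₀)) ≠ 0 ∧
    (∀ n : ℕ, DifferentiableAt ℝ (fun u => ∑ i, x i u ^ n) u₀) ∧
    Summable (fun n : ℕ =>
      ‖deriv (fun u => ∑ i, x i u ^ (n + 1)) u₀ / ((n + 1 : ℂ) * b ^ (n + 1))‖) ∧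
    deriv (fun u => ∏ i, (b - x i u)) u₀ / (∏ i, (b - x i u₀)) =
      - ∑' n : ℕ,
          deriv (fun u => ∑ i, x i u ^ (n + 1)) u₀ / ((n + 1 : ℂ) * b ^ (n + 1)) := by
  set d : Fin g → ℂ := fun i => deriv (x i) u₀ with hd
  have hxd : ∀ i, HasDerivAt (x i) (d i) u₀ := fun i => (hdiff i).hasDerivAt
  have hne : ∀ i, b - x i u₀ ≠ 0 := by
    intro i h
    have hxb : x i u₀ = b := by rwa [sub_eq_zero, eq_comm] at h
    exact absurd (hx i) (by rw [hxb]; exact lt_irrefl _)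
  have hF : (∏ i, (b - x i u₀)) ≠ 0 := Finset.prod_ne_zero_iff.mpr fun i _ => hne i
  -- derivative of power sums
  have hqd : ∀ n : ℕ, HasDerivAt (fun u => ∑ i, x i u ^ (n + 1))
      (∑ i, ((n : ℂ) + 1) * x i u₀ ^ n * d i) u₀ :=
    fun n => HasDerivAt.fun_sum fun i _ => hasDerivAt_pow_comp (hxd i) n
  have hqderiv : ∀ n : ℕ, deriv (fun u => ∑ i, x i u ^ (n + 1)) u₀ =
      ∑ i, ((n : ℂ) + 1) * x i u₀ ^ n * d i := fun n => (hqd n).deriv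
  -- the simplified terms
  set a : Fin g → ℕ → ℂ := fun i n => d i / b * (x i u₀ / b) ^ n with ha
  have hterm : ∀ n : ℕ, deriv (fun u => ∑ i, x i u ^ (n + 1)) u₀ / ((n + 1 : ℂ) * b ^ (n + 1)) =
      ∑ i, a i n := by
    intro n
    rw [hqderiv n, Finset.sum_div]
    refine Finset.sum_congr rfl fun i _ => ?_
    have hn : ((n : ℂ) + 1) ≠ 0 := Nat.cast_add_one_ne_zero n
    have hbn : b ^ (n + 1) ≠ 0 := pow_ne_zero _ hb
    rw [ha]
    field_simp
    rw [div_pow, mul_div_assoc', eq_div_iff (pow_ne_zero _ hb)]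
    ring
  have hratio : ∀ i, ‖x i u₀ / b‖ < 1 := by
    intro i
    rw [norm_div]
    rw [div_lt_one (by simpa using (norm_pos_iff.mpr hb))]
    exact hx i
  have hsumm_a : ∀ i, Summable fun n => ‖a i n‖ := by
    intro i
    simp only [ha, norm_mul, norm_pow]
    exact (summable_geometric_of_lt_one (norm_nonneg _) (hratio i)).mul_left _
  have hsumm_norm : ∀ s : Finset (Fin g), Summable fun n : ℕ => ∑ i ∈ s, ‖a i n‖ := by
    intro s
    induction s using Finset.induction with
    | empty => simpa using summable_zero
    | insert _ _ h ih => simpa [Finset.sum_insert h] using (hsumm_a _).add ih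
  have hSummable : Summable (fun n : ℕ =>
      ‖deriv (fun u => ∑ i, x i u ^ (n + 1)) u₀ / ((n + 1 : ℂ) * b ^ (n + 1))‖) := by
    refine Summable.of_nonneg_of_le (fun n => norm_nonneg _) (fun n => ?_) (hsumm_norm univ)
    rw [hterm n]
    exact norm_sum_le _ _
  refine ⟨hF, fun n => ?_, hSummable, ?_⟩
  · exact DifferentiableAt.fun_sum fun i _ => (hdiff i).pow n
  -- main identity
  have hFd : HasDerivAt (fun u => ∏ i, (b - x i u))
      (∑ i, (∏ j ∈ univ.erase i, (b - x j u₀)) • (-(d i))) u₀ := by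
    have := HasDerivAt.fun_finsetProd (u := univ)
      (fun i _ => (hasDerivAt_const u₀ b).fun_sub (hxd i))
    simpa using this
  have hLHS : deriv (fun u => ∏ i, (b - x i u)) u₀ / (∏ i, (b - x i u₀)) =
      ∑ i, -(d i) / (b - x i u₀) := by
    rw [hFd.deriv, Finset.sum_div]
    refine Finset.sum_congr rfl fun i _ => ?_
    rw [smul_eq_mul, ← Finset.mul_prod_erase univ (fun j => b - x j u₀) (mem_univ i),
      mul_comm (b - x i u₀) (∏ j ∈ univ.erase i, (b - x j u₀))]
    exact mul_div_mul_left _ _ (Finset.prod_ne_zero_iff.mpr fun j _ => hne j)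
  have hRHS : (∑' n : ℕ, deriv (fun u => ∑ i, x i u ^ (n + 1)) u₀ / ((n + 1 : ℂ) * b ^ (n + 1))) =
      ∑ i, d i / (b - x i u₀) := by
    rw [tsum_congr hterm, Summable.tsum_finsetSum fun i _ => (hsumm_a i).of_norm]
    refine Finset.sum_congr rfl fun i _ => ?_
    rw [ha]
    simp only
    rw [tsum_mul_left, tsum_geometric_of_norm_lt_one (hratio i)]
    field_simp
  rw [hLHS, hRHS, ← Finset.sum_neg_distrib]
  exact Finset.sum_congr rfl fun i _ => by rw [neg_div]
end

section
/- Let (a_n)_{n∈ℤ} be real numbers with a_0 = 0 and ∑_{n∈ℤ} n² |a_n| < ∞, and define Z : ℝ → ℂ by Z(s) := (2π)^{−1/2} ∑_{n∈ℤ} a_n e^{2π√−1 n s}. Then Z is differentiable with Z′(s) = √(2π) √−1 ∑_{n∈ℤ} n a_n e^{2π√−1 n s}, and the following are equivalent: (i) |Z′(s)| = 1 for all s ∈ ℝ; (ii) for every n ∈ ℤ, 2π ∑_{m∈ℤ} m (n+m) a_m a_{n+m} = δ_{n,0} (Kronecker delta). -/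
open Complex MeasureTheory

noncomputable section ArclengthAux

private def EE (n : ℤ) (s : ℝ) : ℂ :=
  Complex.exp (2 * (Real.pi : ℂ) * Complex.I * (n : ℂ) * (s : ℂ))

private lemma EE_norm (n : ℤ) (s : ℝ) : ‖EE n s‖ = 1 := by
  have h : 2 * (Real.pi : ℂ) * Complex.I * (n : ℂ) * (s : ℂ)
      = ((2 * Real.pi * n * s : ℝ) : ℂ) * Complex.I := by push_cast; ring
  rw [EE, Complex.norm_exp, h]
  simp

private lemma EE_mul (n m : ℤ) (s : ℝ) : EE n s * EE m s = EE (n + m) s := by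
  rw [EE, EE, EE, ← Complex.exp_add]
  congr 1
  push_cast
  ring

private lemma EE_zero (s : ℝ) : EE 0 s = 1 := by simp [EE]

private lemma EE_zero' (n : ℤ) : EE n 0 = 1 := by simp [EE]

private lemma EE_conj (n : ℤ) (s : ℝ) : star (EE n s) = EE (-n) s := by
  rw [EE, EE, Complex.star_def, ← Complex.exp_conj]
  congr 1
  simp only [map_mul, Complex.conj_I, Complex.conj_ofReal, map_intCast, map_ofNat]
  push_cast
  ring

private lemma EE_cont (n : ℤ) : Continuous fun s => EE n s := by
  unfold EE; fun_prop

private lemma EE_hasDeriv (n : ℤ) (s : ℝ) :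
    HasDerivAt (fun t : ℝ => EE n t)
      ((2 * (Real.pi : ℂ) * Complex.I * (n : ℂ)) * EE n s) s := by
  have h2 := (Complex.hasDerivAt_exp (2 * (Real.pi : ℂ) * Complex.I * (n : ℂ) * (s : ℂ))).comp
    (s : ℂ) ((hasDerivAt_id (s : ℂ)).const_mul (2 * (Real.pi : ℂ) * Complex.I * (n : ℂ)))
  have h1 : HasDerivAt (fun z : ℂ => Complex.exp (2 * (Real.pi : ℂ) * Complex.I * (n : ℂ) * z))
      ((2 * (Real.pi : ℂ) * Complex.I * (n : ℂ)) * EE n s) (s : ℂ) := by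
    refine h2.congr_deriv ?_
    rw [EE]; ring
  exact h1.comp_ofReal

private noncomputable def Cc (a : ℤ → ℝ) (n : ℤ) : ℝ :=
  ∑' m : ℤ, ((m : ℝ) * a m) * (((n + m : ℤ) : ℝ) * a (n + m))

private noncomputable def G (a : ℤ → ℝ) (s : ℝ) : ℂ :=
  ∑' n : ℤ, (n : ℂ) * (a n : ℂ) * EE n s

private def φ : ℤ × ℤ ≃ ℤ × ℤ where
  toFun p := (p.2, p.1 + p.2)
  invFun q := (q.2 - q.1, q.1)
  left_inv := by rintro ⟨n, m⟩; simp
  right_inv := by rintro ⟨m, k⟩; simp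

end ArclengthAux

set_option maxHeartbeats 2000000 in
theorem arclength_condition_fourier
    (a : ℤ → ℝ) (ha0 : a 0 = 0)
    (ha : Summable fun n : ℤ => (n : ℝ) ^ 2 * |a n|) (Z : ℝ → ℂ)
    (hZ : ∀ s : ℝ, Z s =
      ((Real.sqrt (2 * Real.pi) : ℂ))⁻¹ *
        ∑' n : ℤ, (a n : ℂ) * Complex.exp (2 * (Real.pi : ℂ) * Complex.I * (n : ℂ) * (s : ℂ))) :
    (∀ s : ℝ, HasDerivAt Z
        ((Real.sqrt (2 * Real.pi) : ℂ) * Complex.I *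
          ∑' n : ℤ, (n : ℂ) * (a n : ℂ) *
            Complex.exp (2 * (Real.pi : ℂ) * Complex.I * (n : ℂ) * (s : ℂ))) s) ∧
    ((∀ s : ℝ, ‖deriv Z s‖ = 1) ↔
      (∀ n : ℤ,
        2 * Real.pi * ∑' m : ℤ, (m : ℝ) * ((n : ℝ) + (m : ℝ)) * a m * a (n + m) =
          if n = 0 then 1 else 0)) := by
  have two_pi_pos : (0:ℝ) < 2 * Real.pi := by positivity
  set c : ℝ := Real.sqrt (2 * Real.pi) with hcdef
  have hc2 : c * c = 2 * Real.pi := Real.mul_self_sqrt two_pi_pos.le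
  have hc0 : 0 < c := Real.sqrt_pos.2 two_pi_pos
  have hcC : ((c : ℝ) : ℂ) * ((c : ℝ) : ℂ) = 2 * (Real.pi : ℂ) := by
    have := congrArg (fun x : ℝ => (x : ℂ)) hc2
    push_cast at this
    exact this
  have hcC0 : ((c : ℝ) : ℂ) ≠ 0 := by exact_mod_cast hc0.ne'
  have key : ∀ n : ℤ, |(n : ℝ)| ≤ (n : ℝ) ^ 2 := by
    intro n
    rcases eq_or_ne n 0 with h | h
    · simp [h]
    · have h1 : (1 : ℝ) ≤ |(n : ℝ)| := by
        rw [← Int.cast_abs]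
        exact_mod_cast Int.one_le_abs h
      nlinarith [abs_nonneg (n : ℝ), _root_.sq_abs (n : ℝ)]
  have hS1 : Summable fun n : ℤ => |(n : ℝ) * a n| := by
    refine Summable.of_nonneg_of_le (fun n => abs_nonneg _) (fun n => ?_) ha
    rw [abs_mul]
    exact mul_le_mul_of_nonneg_right (key n) (abs_nonneg _)
  have hS0 : Summable fun n : ℤ => |a n| := by
    refine Summable.of_nonneg_of_le (fun n => abs_nonneg _) (fun n => ?_) ha
    rcases eq_or_ne n 0 with h | h
    · simp [h, ha0]
    · have h1 : (1 : ℝ) ≤ |(n : ℝ)| := by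
        rw [← Int.cast_abs]; exact_mod_cast Int.one_le_abs h
      nlinarith [abs_nonneg (a n), _root_.sq_abs (n : ℝ), key n]
  -- derivative of the series
  have hderivF : ∀ s : ℝ, HasDerivAt (fun t : ℝ => ∑' n : ℤ, (a n : ℂ) * EE n t)
      (∑' n : ℤ, (a n : ℂ) * ((2 * (Real.pi : ℂ) * Complex.I * (n : ℂ)) * EE n s)) s := by
    intro s
    refine hasDerivAt_tsum (u := fun n : ℤ => 2 * Real.pi * ((n : ℝ) ^ 2 * |a n|)) (y₀ := (0:ℝ))
      (ha.mul_left _) (fun n y => (EE_hasDeriv n y).const_mul _) (fun n y => ?_) ?_ s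
    · have hform : (a n : ℂ) * ((2 * (Real.pi : ℂ) * Complex.I * (n : ℂ)) * EE n y)
          = ((2 * Real.pi * (n : ℝ) * a n : ℝ) : ℂ) * (Complex.I * EE n y) := by
        push_cast; ring
      rw [hform, norm_mul, norm_mul, EE_norm, Complex.norm_I, one_mul, mul_one,
        Complex.norm_real, Real.norm_eq_abs]
      have h1 : |2 * Real.pi * (n : ℝ) * a n| = 2 * Real.pi * (|(n : ℝ)| * |a n|) := by
        rw [abs_mul, abs_mul, abs_of_pos two_pi_pos, mul_assoc]
      rw [h1]
      exact mul_le_mul_of_nonneg_left (mul_le_mul_of_nonneg_right (key n) (abs_nonneg _))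
        two_pi_pos.le
    · have heq : (fun n : ℤ => (a n : ℂ) * EE n 0) = fun n : ℤ => ((a n : ℝ) : ℂ) := by
        funext n; rw [EE_zero', mul_one]
      rw [heq]
      exact Complex.summable_ofReal.2 hS0.of_abs
  have part1 : ∀ s : ℝ, HasDerivAt Z
      (((c : ℝ) : ℂ) * Complex.I * ∑' n : ℤ, (n : ℂ) * (a n : ℂ) * EE n s) s := by
    intro s
    have hZfun : Z = fun t => ((c : ℝ) : ℂ)⁻¹ * ∑' n : ℤ, (a n : ℂ) * EE n t :=
      funext fun t => hZ t
    rw [hZfun]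
    have h1 := (hderivF s).const_mul (((c : ℝ) : ℂ))⁻¹
    refine h1.congr_deriv ?_
    symm
    have hsum : ∑' n : ℤ, (a n : ℂ) * ((2 * (Real.pi : ℂ) * Complex.I * (n : ℂ)) * EE n s)
        = (2 * (Real.pi : ℂ) * Complex.I) * ∑' n : ℤ, (n : ℂ) * (a n : ℂ) * EE n s := by
      rw [← tsum_mul_left]
      exact tsum_congr fun n => by ring
    rw [hsum, ← hcC]
    field_simp
  have hDeriv : ∀ s : ℝ, deriv Z s
      = ((c : ℝ) : ℂ) * Complex.I * ∑' n : ℤ, (n : ℂ) * (a n : ℂ) * EE n s :=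
    fun s => (part1 s).deriv
  have habsD : ∀ s : ℝ, ‖deriv Z s‖ = c * ‖G a s‖ := by
    intro s
    rw [hDeriv s, show (∑' n : ℤ, (n : ℂ) * (a n : ℂ) * EE n s) = G a s from rfl,
      norm_mul, norm_mul, Complex.norm_real, Complex.norm_I, Real.norm_eq_abs, abs_of_pos hc0, mul_one]
  have hTnorm : ∀ (s : ℝ) (n : ℤ), ‖(n : ℂ) * (a n : ℂ) * EE n s‖ = |(n : ℝ) * a n| := by
    intro s n
    rw [show (n : ℂ) * (a n : ℂ) = (((n : ℝ) * a n : ℝ) : ℂ) by push_cast; ring,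
      norm_mul, EE_norm, mul_one, Complex.norm_real, Real.norm_eq_abs]
  have hTnorm' : ∀ (s : ℝ) (n : ℤ), ‖(n : ℂ) * (a n : ℂ) * EE (-n) s‖ = |(n : ℝ) * a n| := by
    intro s n
    rw [show (n : ℂ) * (a n : ℂ) = (((n : ℝ) * a n : ℝ) : ℂ) by push_cast; ring,
      norm_mul, EE_norm, mul_one, Complex.norm_real, Real.norm_eq_abs]
  have hTs : ∀ s : ℝ, Summable fun n : ℤ => ‖(n : ℂ) * (a n : ℂ) * EE n s‖ := fun s => by
    simpa only [hTnorm s] using hS1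
  have hTs' : ∀ s : ℝ, Summable fun n : ℤ => ‖(n : ℂ) * (a n : ℂ) * EE (-n) s‖ := fun s => by
    simpa only [hTnorm' s] using hS1
  have hconj : ∀ s : ℝ, star (G a s) = ∑' n : ℤ, (n : ℂ) * (a n : ℂ) * EE (-n) s := by
    intro s
    simp only [G]
    rw [tsum_star]
    refine tsum_congr fun n => ?_
    simp only [star_mul', EE_conj, Complex.star_def, map_intCast, Complex.conj_ofReal]
  have hgg : ∀ s : ℝ, G a s * star (G a s) = ∑' n : ℤ, ((Cc a n : ℝ) : ℂ) * EE (-n) s := by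
    intro s
    have hmulsum : Summable fun p : ℤ × ℤ =>
        ((p.1 : ℂ) * (a p.1 : ℂ) * EE p.1 s) * ((p.2 : ℂ) * (a p.2 : ℂ) * EE (-p.2) s) :=
      summable_mul_of_summable_norm (f := fun n : ℤ => (n : ℂ) * (a n : ℂ) * EE n s)
        (g := fun n : ℤ => (n : ℂ) * (a n : ℂ) * EE (-n) s) (hTs s) (hTs' s)
    have h1 : G a s * star (G a s) = ∑' p : ℤ × ℤ,
        ((p.1 : ℂ) * (a p.1 : ℂ) * EE p.1 s) * ((p.2 : ℂ) * (a p.2 : ℂ) * EE (-p.2) s) := by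
      rw [hconj s]
      simp only [G]
      exact tsum_mul_tsum_of_summable_norm (f := fun n : ℤ => (n : ℂ) * (a n : ℂ) * EE n s)
        (g := fun n : ℤ => (n : ℂ) * (a n : ℂ) * EE (-n) s) (hTs s) (hTs' s)
    have h2 : (∑' p : ℤ × ℤ,
          ((p.1 : ℂ) * (a p.1 : ℂ) * EE p.1 s) * ((p.2 : ℂ) * (a p.2 : ℂ) * EE (-p.2) s))
        = ∑' q : ℤ × ℤ, ((q.2 : ℂ) * (a q.2 : ℂ) * EE q.2 s) *
            (((q.1 + q.2 : ℤ) : ℂ) * (a (q.1 + q.2) : ℂ) * EE (-(q.1 + q.2)) s) :=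
      (φ.tsum_eq _).symm
    have hsq : Summable fun q : ℤ × ℤ => ((q.2 : ℂ) * (a q.2 : ℂ) * EE q.2 s) *
        (((q.1 + q.2 : ℤ) : ℂ) * (a (q.1 + q.2) : ℂ) * EE (-(q.1 + q.2)) s) :=
      φ.summable_iff.2 hmulsum
    have h3 := Summable.tsum_prod' hsq fun n => hsq.prod_factor n
    have h4 : ∀ n : ℤ, (∑' m : ℤ, ((m : ℂ) * (a m : ℂ) * EE m s) *
          (((n + m : ℤ) : ℂ) * (a (n + m) : ℂ) * EE (-(n + m)) s))
        = ((Cc a n : ℝ) : ℂ) * EE (-n) s := by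
      intro n
      have hterm : ∀ m : ℤ, ((m : ℂ) * (a m : ℂ) * EE m s) *
            (((n + m : ℤ) : ℂ) * (a (n + m) : ℂ) * EE (-(n + m)) s)
          = ((((m : ℝ) * a m) * (((n + m : ℤ) : ℝ) * a (n + m)) : ℝ) : ℂ) * EE (-n) s := by
        intro m
        have e1 : EE m s * EE (-(n + m)) s = EE (-n) s := by
          rw [EE_mul]; congr 1; ring
        calc ((m : ℂ) * (a m : ℂ) * EE m s) *
              (((n + m : ℤ) : ℂ) * (a (n + m) : ℂ) * EE (-(n + m)) s)
            = ((m : ℂ) * (a m : ℂ) * (((n + m : ℤ) : ℂ) * (a (n + m) : ℂ))) *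
              (EE m s * EE (-(n + m)) s) := by ring
          _ = ((((m : ℝ) * a m) * (((n + m : ℤ) : ℝ) * a (n + m)) : ℝ) : ℂ) * EE (-n) s := by
              rw [e1]; congr 1; push_cast; ring
      rw [tsum_congr hterm, tsum_mul_right, ← Complex.ofReal_tsum]
      simp only [Cc]
    rw [h1, h2, h3]
    exact tsum_congr h4
  have hCeq : ∀ n : ℤ,
      (∑' m : ℤ, (m : ℝ) * ((n : ℝ) + (m : ℝ)) * a m * a (n + m)) = Cc a n := by
    intro n
    simp only [Cc]
    exact tsum_congr fun m => by push_cast; ring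
  have hPabs : Summable fun p : ℤ × ℤ => |(p.1 : ℝ) * a p.1| * |(p.2 : ℝ) * a p.2| :=
    summable_mul_of_summable_norm (f := fun n : ℤ => |(n : ℝ) * a n|)
      (g := fun n : ℤ => |(n : ℝ) * a n|)
      (by simpa [Real.norm_eq_abs, _root_.abs_abs] using hS1)
      (by simpa [Real.norm_eq_abs, _root_.abs_abs] using hS1)
  have hPabs2 : Summable fun q : ℤ × ℤ =>
      |(q.2 : ℝ) * a q.2| * |((q.1 + q.2 : ℤ) : ℝ) * a (q.1 + q.2)| :=
    φ.summable_iff.2 hPabs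
  have hD : Summable fun n : ℤ =>
      ∑' m : ℤ, |(m : ℝ) * a m| * |((n + m : ℤ) : ℝ) * a (n + m)| :=
    (hPabs2.hasSum.prod_fiberwise fun n => (hPabs2.prod_factor n).hasSum).summable
  have hCabs : Summable fun n : ℤ => |Cc a n| := by
    refine Summable.of_nonneg_of_le (fun n => abs_nonneg _) (fun n => ?_) hD
    have h1 : Summable fun m : ℤ => ‖((m : ℝ) * a m) * (((n + m : ℤ) : ℝ) * a (n + m))‖ := by
      simpa only [Real.norm_eq_abs, abs_mul] using hPabs2.prod_factor n
    have h3 : (∑' m : ℤ, ‖((m : ℝ) * a m) * (((n + m : ℤ) : ℝ) * a (n + m))‖)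
        = ∑' m : ℤ, |(m : ℝ) * a m| * |((n + m : ℤ) : ℝ) * a (n + m)| :=
      tsum_congr fun m => by rw [Real.norm_eq_abs, abs_mul]
    have h2 := norm_tsum_le_tsum_norm h1
    rw [h3] at h2
    simp only [Cc]
    rw [← Real.norm_eq_abs]
    exact h2
  have int_EE : ∀ j : ℤ, (∫ s in Set.Ioc (0:ℝ) 1, EE j s) = if j = 0 then 1 else 0 := by
    intro j
    by_cases hj : j = 0
    · subst hj
      simp only [EE_zero, if_pos rfl]
      rw [setIntegral_const]
      simp [Real.volume_Ioc]
    · rw [if_neg hj, ← intervalIntegral.integral_of_le zero_le_one]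
      have hc' : (2 * (Real.pi : ℂ) * Complex.I * (j : ℂ)) ≠ 0 := by
        refine mul_ne_zero (mul_ne_zero (mul_ne_zero two_ne_zero ?_) Complex.I_ne_zero) ?_
        · exact_mod_cast Real.pi_ne_zero
        · exact_mod_cast hj
      have hintegral := integral_exp_mul_complex (a := (0:ℝ)) (b := 1) hc'
      rw [show (∫ s in (0:ℝ)..1, EE j s)
          = ∫ s in (0:ℝ)..1, Complex.exp ((2 * (Real.pi : ℂ) * Complex.I * (j : ℂ)) * (s : ℂ))
          from rfl, hintegral, Complex.ofReal_one, Complex.ofReal_zero, mul_one, mul_zero,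
        Complex.exp_zero,
        show 2 * (Real.pi : ℂ) * Complex.I * (j : ℂ) = (j : ℂ) * (2 * (Real.pi : ℂ) * Complex.I)
          from by ring,
        Complex.exp_int_mul_two_pi_mul_I, sub_self, zero_div]
  refine ⟨part1, ?_⟩
  constructor
  · intro h k
    have hval : ∀ s : ℝ, (∑' n : ℤ, ((Cc a n : ℝ) : ℂ) * EE (-n) s)
        = (((2 * Real.pi)⁻¹ : ℝ) : ℂ) := by
      intro s
      have h1 : ‖G a s‖ = c⁻¹ := by
        have h2 := h s
        rw [habsD s] at h2
        exact eq_inv_of_mul_eq_one_left (by rw [mul_comm]; exact h2)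
      have h2 : Complex.normSq (G a s) = (2 * Real.pi)⁻¹ := by
        rw [← Complex.sq_norm, h1, inv_pow, pow_two, hc2]
      rw [← hgg s, show star (G a s) = (starRingEnd ℂ) (G a s) from rfl, Complex.mul_conj, h2]
    rw [hCeq k]
    have hFint : ∀ n : ℤ, Integrable (fun s : ℝ => ((Cc a n : ℝ) : ℂ) * EE (-n) s * EE k s)
        (volume.restrict (Set.Ioc (0:ℝ) 1)) := fun n =>
      Continuous.integrableOn_Ioc ((continuous_const.mul (EE_cont _)).mul (EE_cont _))
    have hFnorm : ∀ n : ℤ,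
        (∫ s in Set.Ioc (0:ℝ) 1, ‖((Cc a n : ℝ) : ℂ) * EE (-n) s * EE k s‖) = |Cc a n| := by
      intro n
      have heq : (fun s : ℝ => ‖((Cc a n : ℝ) : ℂ) * EE (-n) s * EE k s‖)
          = fun _ : ℝ => |Cc a n| := by
        funext s
        rw [norm_mul, norm_mul, EE_norm, EE_norm, mul_one, mul_one, Complex.norm_real,
          Real.norm_eq_abs]
      rw [heq, setIntegral_const]
      simp [Real.volume_Ioc]
    have hFsum : Summable fun n : ℤ =>
        ∫ s in Set.Ioc (0:ℝ) 1, ‖((Cc a n : ℝ) : ℂ) * EE (-n) s * EE k s‖ := by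
      simp only [hFnorm]; exact hCabs
    have hkey := hasSum_integral_of_summable_integral_norm hFint hFsum
    have hLHS : (∑' n : ℤ, ∫ s in Set.Ioc (0:ℝ) 1, ((Cc a n : ℝ) : ℂ) * EE (-n) s * EE k s)
        = ∫ s in Set.Ioc (0:ℝ) 1, ∑' n : ℤ, ((Cc a n : ℝ) : ℂ) * EE (-n) s * EE k s :=
      hkey.tsum_eq
    have hint : ∀ n : ℤ, (∫ s in Set.Ioc (0:ℝ) 1, ((Cc a n : ℝ) : ℂ) * EE (-n) s * EE k s)
        = ((Cc a n : ℝ) : ℂ) * (if -n + k = 0 then 1 else 0) := by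
      intro n
      have heq : (fun s : ℝ => ((Cc a n : ℝ) : ℂ) * EE (-n) s * EE k s)
          = fun s : ℝ => ((Cc a n : ℝ) : ℂ) * EE (-n + k) s := by
        funext s; rw [mul_assoc, EE_mul]
      rw [heq, MeasureTheory.integral_const_mul, int_EE]
    have hsum1 : (∑' n : ℤ, ((Cc a n : ℝ) : ℂ) * (if -n + k = 0 then 1 else 0))
        = ((Cc a k : ℝ) : ℂ) := by
      rw [tsum_eq_single k (fun n hn => by
        rw [if_neg (fun hc => hn (by omega)), mul_zero])]
      rw [if_pos (by ring), mul_one]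
    have hRHS : (∫ s in Set.Ioc (0:ℝ) 1, ∑' n : ℤ, ((Cc a n : ℝ) : ℂ) * EE (-n) s * EE k s)
        = (((2 * Real.pi)⁻¹ : ℝ) : ℂ) * (if k = 0 then 1 else 0) := by
      have heq : (fun s : ℝ => ∑' n : ℤ, ((Cc a n : ℝ) : ℂ) * EE (-n) s * EE k s)
          = fun s : ℝ => (((2 * Real.pi)⁻¹ : ℝ) : ℂ) * EE k s := by
        funext s
        rw [tsum_mul_right, hval s]
      rw [heq, MeasureTheory.integral_const_mul, int_EE]
    have hfinal : ((Cc a k : ℝ) : ℂ)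
        = (((2 * Real.pi)⁻¹ : ℝ) : ℂ) * (if k = 0 then 1 else 0) := by
      calc ((Cc a k : ℝ) : ℂ) = _ := hsum1.symm
        _ = ∑' n : ℤ, ∫ s in Set.Ioc (0:ℝ) 1, ((Cc a n : ℝ) : ℂ) * EE (-n) s * EE k s :=
          (tsum_congr hint).symm
        _ = ∫ s in Set.Ioc (0:ℝ) 1, ∑' n : ℤ, ((Cc a n : ℝ) : ℂ) * EE (-n) s * EE k s := hLHS
        _ = _ := hRHS
    by_cases hk : k = 0
    · subst hk
      rw [if_pos rfl]
      rw [if_pos rfl, mul_one] at hfinal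
      have hr : Cc a 0 = (2 * Real.pi)⁻¹ := by exact_mod_cast hfinal
      rw [hr]
      field_simp
    · rw [if_neg hk]
      rw [if_neg hk, mul_zero] at hfinal
      have hr : Cc a k = 0 := by exact_mod_cast hfinal
      rw [hr, mul_zero]
  · intro hC s
    have hCval : ∀ n : ℤ, Cc a n = if n = 0 then (2 * Real.pi)⁻¹ else 0 := by
      intro n
      have hn := hC n
      rw [hCeq n] at hn
      by_cases h0 : n = 0
      · subst h0
        rw [if_pos rfl]
        exact eq_inv_of_mul_eq_one_left (by rw [mul_comm]; exact hn)
      · rw [if_neg h0] at hn ⊢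
        rcases mul_eq_zero.1 hn with hx | hx
        · exact absurd hx two_pi_pos.ne'
        · exact hx
    rw [habsD s]
    have hsingle : G a s * star (G a s) = (((2 * Real.pi)⁻¹ : ℝ) : ℂ) := by
      rw [hgg s, tsum_eq_single 0 (fun n hn => by
        rw [hCval n, if_neg hn, Complex.ofReal_zero, zero_mul])]
      rw [hCval 0, if_pos rfl, neg_zero, EE_zero, mul_one]
    have h2 : Complex.normSq (G a s) = (2 * Real.pi)⁻¹ := by
      have h3 := hsingle
      rw [show star (G a s) = (starRingEnd ℂ) (G a s) from rfl, Complex.mul_conj] at h3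
      exact_mod_cast h3
    rw [Complex.norm_def, h2, Real.sqrt_inv, ← hcdef]
    field_simp
end

section
/- Let (a_n)_{n∈ℤ} be real numbers with a_0 = 0 and ∑_{n∈ℤ} |n|³ |a_n| < ∞, define Z : ℝ → ℂ by Z(s) := (2π)^{−1/2} ∑_{n∈ℤ} a_n e^{2π√−1 n s}, and assume |Z′(s)| = 1 for all s ∈ ℝ. Then Z is twice differentiable and for all s ∈ ℝ, (1/√−1) · Z″(s) · conj(Z′(s)) = ∑_{n∈ℤ} ( 4π² ∑_{m∈ℤ} (n+m)² m a_m a_{n+m} ) e^{2π√−1 n s}, where each inner series converges absolutely. -/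
open Complex

private noncomputable def Ee (n : ℤ) (t : ℝ) : ℂ :=
  Complex.exp (2 * (Real.pi : ℂ) * Complex.I * (n : ℂ) * (t : ℂ))

private lemma cexp_norm (n : ℤ) (s : ℝ) : ‖Ee n s‖ = 1 := by
  rw [Ee, show (2 * (Real.pi : ℂ) * Complex.I * (n : ℂ) * (s : ℂ)) =
      ((2 * Real.pi * (n : ℝ) * s : ℝ) : ℂ) * Complex.I by push_cast; ring,
    Complex.norm_exp_ofReal_mul_I]

private lemma hasDerivAt_cexp (n : ℤ) (s : ℝ) :
    HasDerivAt (fun t : ℝ => Ee n t)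
      (2 * (Real.pi : ℂ) * Complex.I * (n : ℂ) * Ee n s) s := by
  have h : HasDerivAt (fun z : ℂ => Complex.exp (2 * (Real.pi : ℂ) * Complex.I * (n : ℂ) * z))
      (Complex.exp (2 * (Real.pi : ℂ) * Complex.I * (n : ℂ) * (s : ℂ)) *
        (2 * (Real.pi : ℂ) * Complex.I * (n : ℂ) * 1)) (s : ℂ) :=
    ((hasDerivAt_id ((s : ℝ) : ℂ)).const_mul _).cexp
  have := h.comp_ofReal
  convert this using 1
  · rfl
  rw [Ee]; ring

private noncomputable def g0 (a : ℤ → ℝ) (n : ℤ) (t : ℝ) : ℂ := (a n : ℂ) * Ee n t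
private noncomputable def g1 (a : ℤ → ℝ) (n : ℤ) (t : ℝ) : ℂ :=
  (2 * (Real.pi : ℂ) * Complex.I * (n : ℂ)) * ((a n : ℂ) * Ee n t)
private noncomputable def g2 (a : ℤ → ℝ) (n : ℤ) (t : ℝ) : ℂ :=
  (2 * (Real.pi : ℂ) * Complex.I * (n : ℂ)) ^ 2 * ((a n : ℂ) * Ee n t)

private lemma norm_g0 (a : ℤ → ℝ) (n : ℤ) (t : ℝ) : ‖g0 a n t‖ = |a n| := by
  rw [g0, norm_mul, cexp_norm, Complex.norm_real, Real.norm_eq_abs, mul_one]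

private lemma norm_g1 (a : ℤ → ℝ) (n : ℤ) (t : ℝ) :
    ‖g1 a n t‖ = 2 * Real.pi * (|(n : ℝ)| * |a n|) := by
  rw [g1]
  simp only [norm_mul, cexp_norm, Complex.norm_real, Real.norm_eq_abs, Complex.norm_I,
    Complex.norm_intCast, Complex.norm_two, mul_one]
  rw [_root_.abs_of_nonneg Real.pi_pos.le]
  ring

private lemma norm_g2 (a : ℤ → ℝ) (n : ℤ) (t : ℝ) :
    ‖g2 a n t‖ = (2 * Real.pi) ^ 2 * (|(n : ℝ)| ^ 2 * |a n|) := by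
  rw [g2]
  simp only [norm_mul, norm_pow, cexp_norm, Complex.norm_real, Real.norm_eq_abs, Complex.norm_I,
    Complex.norm_intCast, Complex.norm_two, mul_one]
  rw [_root_.abs_of_nonneg Real.pi_pos.le]
  ring

private lemma hasDerivAt_g0 (a : ℤ → ℝ) (n : ℤ) (s : ℝ) :
    HasDerivAt (fun t => g0 a n t) (g1 a n s) s := by
  have := (hasDerivAt_cexp n s).const_mul ((a n : ℂ))
  convert this using 1
  · rfl
  · rfl
  rw [g1]; ring

private lemma hasDerivAt_g1 (a : ℤ → ℝ) (n : ℤ) (s : ℝ) :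
    HasDerivAt (fun t => g1 a n t) (g2 a n s) s := by
  have := ((hasDerivAt_cexp n s).const_mul ((a n : ℂ))).const_mul
    (2 * (Real.pi : ℂ) * Complex.I * (n : ℂ))
  convert this using 1
  · rfl
  · rfl
  rw [g2]; ring

private lemma summable_maj (a : ℤ → ℝ) (ha0 : a 0 = 0)
    (ha : Summable fun n : ℤ => |(n : ℝ)| ^ 3 * |a n|) (k : ℕ) (hk : k ≤ 3) :
    Summable fun n : ℤ => |(n : ℝ)| ^ k * |a n| := by
  apply ha.of_nonneg_of_le (fun n => by positivity)
  intro n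
  rcases eq_or_ne n 0 with rfl | hn
  · simp [ha0]
  · have h1 : (1 : ℝ) ≤ |(n : ℝ)| := by
      rw [← Int.cast_abs]
      exact_mod_cast Int.one_le_abs hn
    exact mul_le_mul_of_nonneg_right (pow_le_pow_right₀ h1 hk) (abs_nonneg _)

section
variable {a : ℤ → ℝ}

private lemma summable_g0 (ha0 : a 0 = 0)
    (ha : Summable fun n : ℤ => |(n : ℝ)| ^ 3 * |a n|) (t : ℝ) :
    Summable fun n => g0 a n t := by
  apply Summable.of_norm
  simp only [norm_g0]
  simpa using summable_maj a ha0 ha 0 (by norm_num)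

private lemma summable_u1 (ha0 : a 0 = 0)
    (ha : Summable fun n : ℤ => |(n : ℝ)| ^ 3 * |a n|) :
    Summable fun n : ℤ => 2 * Real.pi * (|(n : ℝ)| * |a n|) := by
  refine ((summable_maj a ha0 ha 1 (by norm_num)).mul_left (2 * Real.pi)).congr ?_
  intro b; rw [pow_one]

private lemma summable_g1 (ha0 : a 0 = 0)
    (ha : Summable fun n : ℤ => |(n : ℝ)| ^ 3 * |a n|) (t : ℝ) :
    Summable fun n => g1 a n t := by
  apply Summable.of_norm
  simp only [norm_g1]
  exact summable_u1 ha0 ha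

private lemma summable_norm_g1 (ha0 : a 0 = 0)
    (ha : Summable fun n : ℤ => |(n : ℝ)| ^ 3 * |a n|) (t : ℝ) :
    Summable fun n => ‖g1 a n t‖ := by
  simp only [norm_g1]
  exact summable_u1 ha0 ha

private lemma summable_norm_g2 (ha0 : a 0 = 0)
    (ha : Summable fun n : ℤ => |(n : ℝ)| ^ 3 * |a n|) (t : ℝ) :
    Summable fun n => ‖g2 a n t‖ := by
  simp only [norm_g2]
  exact (summable_maj a ha0 ha 2 (by norm_num)).mul_left _

private lemma hasDerivAt_F (ha0 : a 0 = 0)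
    (ha : Summable fun n : ℤ => |(n : ℝ)| ^ 3 * |a n|) (s : ℝ) :
    HasDerivAt (fun t => ∑' n, g0 a n t) (∑' n, g1 a n s) s := by
  refine hasDerivAt_tsum (u := fun n : ℤ => 2 * Real.pi * (|(n : ℝ)| * |a n|))
    (summable_u1 ha0 ha)
    (fun (n : ℤ) (t : ℝ) => hasDerivAt_g0 a n t)
    (fun (n : ℤ) (t : ℝ) => le_of_eq (norm_g1 a n t)) (summable_g0 ha0 ha 0) s

private lemma hasDerivAt_F1 (ha0 : a 0 = 0)
    (ha : Summable fun n : ℤ => |(n : ℝ)| ^ 3 * |a n|) (s : ℝ) :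
    HasDerivAt (fun t => ∑' n, g1 a n t) (∑' n, g2 a n s) s := by
  refine hasDerivAt_tsum (u := fun n : ℤ => (2 * Real.pi) ^ 2 * (|(n : ℝ)| ^ 2 * |a n|))
    ((summable_maj a ha0 ha 2 (by norm_num)).mul_left _)
    (fun (n : ℤ) (t : ℝ) => hasDerivAt_g1 a n t)
    (fun (n : ℤ) (t : ℝ) => le_of_eq (norm_g2 a n t)) (summable_g1 ha0 ha 0) s

end

private lemma conj_g1 (a : ℤ → ℝ) (m : ℤ) (s : ℝ) :
    (starRingEnd ℂ) (g1 a m s) =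
      (-(2 * (Real.pi : ℂ) * Complex.I * (m : ℂ))) *
        ((a m : ℂ) * Complex.exp (-(2 * (Real.pi : ℂ) * Complex.I * (m : ℂ) * (s : ℂ)))) := by
  rw [g1, Ee]
  simp only [map_mul, ← Complex.exp_conj, Complex.conj_I, Complex.conj_ofReal, map_intCast,
    map_ofNat]
  ring_nf

private lemma hconst (x y : ℂ) :
    (1 / Complex.I) * ((2 * (Real.pi : ℂ) * Complex.I * x) ^ 2 *
      (-(2 * (Real.pi : ℂ) * Complex.I * y))) =
    2 * (Real.pi : ℂ) * (4 * (Real.pi : ℂ) ^ 2 * (x ^ 2 * y)) := by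
  rw [one_div, Complex.inv_I]
  linear_combination (8 * (Real.pi : ℂ) ^ 3 * x ^ 2 * y * (Complex.I ^ 2 - 1)) * Complex.I_sq

private lemma hexp (n m : ℤ) (s : ℝ) :
    Ee (n + m) s * Complex.exp (-(2 * (Real.pi : ℂ) * Complex.I * (m : ℂ) * (s : ℂ))) =
      Ee n s := by
  rw [Ee, Ee, ← Complex.exp_add]
  congr 1
  push_cast
  ring

private lemma hcc : ((Real.sqrt (2 * Real.pi) : ℂ))⁻¹ * ((Real.sqrt (2 * Real.pi) : ℂ))⁻¹ =
    (((2 * Real.pi : ℝ)) : ℂ)⁻¹ := by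
  rw [← mul_inv, ← Complex.ofReal_mul, Real.mul_self_sqrt (by positivity)]

private lemma key (a : ℤ → ℝ) (n m : ℤ) (s : ℝ) :
    (1 / Complex.I) * ((Real.sqrt (2 * Real.pi) : ℂ))⁻¹ * ((Real.sqrt (2 * Real.pi) : ℂ))⁻¹ *
      (g2 a (n + m) s * (starRingEnd ℂ) (g1 a m s)) =
    ((4 * Real.pi ^ 2 * (((n : ℝ) + (m : ℝ)) ^ 2 * (m : ℝ) * a m * a (n + m)) : ℝ) : ℂ) *
      Ee n s := by
  rw [conj_g1, g2]
  have h1 := hconst (((n + m : ℤ) : ℂ)) ((m : ℂ))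
  have h2 := hexp n m s
  have hπ : ((Real.pi : ℂ)) ≠ 0 := Complex.ofReal_ne_zero.mpr Real.pi_ne_zero
  calc (1 / Complex.I) * ((Real.sqrt (2 * Real.pi) : ℂ))⁻¹ * ((Real.sqrt (2 * Real.pi) : ℂ))⁻¹ *
      ((2 * (Real.pi : ℂ) * Complex.I * ((n + m : ℤ) : ℂ)) ^ 2 * ((a (n + m) : ℂ) * Ee (n + m) s) *
        ((-(2 * (Real.pi : ℂ) * Complex.I * (m : ℂ))) *
          ((a m : ℂ) * Complex.exp (-(2 * (Real.pi : ℂ) * Complex.I * (m : ℂ) * (s : ℂ))))))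
      = (((Real.sqrt (2 * Real.pi) : ℂ))⁻¹ * ((Real.sqrt (2 * Real.pi) : ℂ))⁻¹) *
        ((1 / Complex.I) * ((2 * (Real.pi : ℂ) * Complex.I * ((n + m : ℤ) : ℂ)) ^ 2 *
          (-(2 * (Real.pi : ℂ) * Complex.I * (m : ℂ)))) *
         ((a (n + m) : ℂ) * (a m : ℂ)) *
         (Ee (n + m) s * Complex.exp (-(2 * (Real.pi : ℂ) * Complex.I * (m : ℂ) * (s : ℂ))))) := by
        ring
    _ = (((2 * Real.pi : ℝ)) : ℂ)⁻¹ *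
        ((2 * (Real.pi : ℂ) * (4 * (Real.pi : ℂ) ^ 2 * (((n + m : ℤ) : ℂ) ^ 2 * (m : ℂ)))) *
         ((a (n + m) : ℂ) * (a m : ℂ)) * Ee n s) := by rw [h1, h2, hcc]
    _ = ((4 * Real.pi ^ 2 * (((n : ℝ) + (m : ℝ)) ^ 2 * (m : ℝ) * a m * a (n + m)) : ℝ) : ℂ) *
        Ee n s := by push_cast; field_simp


theorem curvature_fourier_coefficients
    (a : ℤ → ℝ) (ha0 : a 0 = 0)
    (ha : Summable fun n : ℤ => |(n : ℝ)| ^ 3 * |a n|) (Z : ℝ → ℂ)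
    (hZ : ∀ s : ℝ, Z s =
      ((Real.sqrt (2 * Real.pi) : ℂ))⁻¹ *
        ∑' n : ℤ, (a n : ℂ) * Complex.exp (2 * (Real.pi : ℂ) * Complex.I * (n : ℂ) * (s : ℂ)))
    (harc : ∀ s : ℝ, ‖deriv Z s‖ = 1) :
    Differentiable ℝ Z ∧ Differentiable ℝ (deriv Z) ∧
    (∀ n : ℤ, Summable fun m : ℤ =>
      |(((n : ℝ) + (m : ℝ)) ^ 2 * (m : ℝ)) * a m * a (n + m)|) ∧
    (∀ s : ℝ,
      (1 / Complex.I) * deriv (deriv Z) s * (starRingEnd ℂ) (deriv Z s) =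
        ∑' n : ℤ,
          ((4 * Real.pi ^ 2 *
            ∑' m : ℤ, ((n : ℝ) + (m : ℝ)) ^ 2 * (m : ℝ) * a m * a (n + m) : ℝ) : ℂ) *
            Complex.exp (2 * (Real.pi : ℂ) * Complex.I * (n : ℂ) * (s : ℂ))) := by
  have hZfun : Z = fun s => ((Real.sqrt (2 * Real.pi) : ℂ))⁻¹ * ∑' n, g0 a n s :=
    funext fun s => by rw [hZ s]; rfl
  have hdZ : ∀ s, HasDerivAt Z
      (((Real.sqrt (2 * Real.pi) : ℂ))⁻¹ * ∑' n, g1 a n s) s := by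
    intro s
    rw [hZfun]
    exact (hasDerivAt_F ha0 ha s).const_mul _
  have hderivZ : deriv Z = fun s => ((Real.sqrt (2 * Real.pi) : ℂ))⁻¹ * ∑' n, g1 a n s :=
    funext fun s => (hdZ s).deriv
  have hdZ2 : ∀ s, HasDerivAt (deriv Z)
      (((Real.sqrt (2 * Real.pi) : ℂ))⁻¹ * ∑' n, g2 a n s) s := by
    intro s
    rw [hderivZ]
    exact (hasDerivAt_F1 ha0 ha s).const_mul _
  have hsum3 : ∀ n : ℤ, Summable fun m : ℤ =>
      |(((n : ℝ) + (m : ℝ)) ^ 2 * (m : ℝ)) * a m * a (n + m)| := by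
    intro n
    set B : ℝ := ∑' j : ℤ, |(j : ℝ)| ^ 2 * |a j| with hB
    have hS2 : Summable fun j : ℤ => |(j : ℝ)| ^ 2 * |a j| := summable_maj a ha0 ha 2 (by norm_num)
    have hle : ∀ k : ℤ, |(k : ℝ)| ^ 2 * |a k| ≤ B :=
      fun k => Summable.le_tsum hS2 k (fun j _ => by positivity)
    have hmaj : Summable fun m : ℤ => B * (|(m : ℝ)| * |a m|) :=
      ((summable_maj a ha0 ha 1 (by norm_num)).mul_left B).congr (fun b => by rw [pow_one])
    refine Summable.of_nonneg_of_le (fun m => abs_nonneg _) (fun m => ?_) hmaj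
    calc |(((n : ℝ) + (m : ℝ)) ^ 2 * (m : ℝ)) * a m * a (n + m)|
        = (((n : ℝ) + (m : ℝ)) ^ 2 * |a (n + m)|) * (|(m : ℝ)| * |a m|) := by
          rw [abs_mul, abs_mul, abs_mul, _root_.abs_pow, _root_.sq_abs]; ring
      _ ≤ B * (|(m : ℝ)| * |a m|) := by
          refine mul_le_mul_of_nonneg_right ?_ (by positivity)
          have h := hle (n + m)
          rw [show |((n + m : ℤ) : ℝ)| ^ 2 = ((n : ℝ) + (m : ℝ)) ^ 2 by
            rw [_root_.sq_abs]; push_cast; ring] at h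
          exact h
  refine ⟨fun s => (hdZ s).differentiableAt, fun s => (hdZ2 s).differentiableAt, hsum3, ?_⟩
  intro s
  have e2 : deriv (deriv Z) s = ((Real.sqrt (2 * Real.pi) : ℂ))⁻¹ * ∑' n, g2 a n s :=
    (hdZ2 s).deriv
  have e1 : deriv Z s = ((Real.sqrt (2 * Real.pi) : ℂ))⁻¹ * ∑' n, g1 a n s := (hdZ s).deriv
  rw [e2, e1]
  have hconj_c : (starRingEnd ℂ) (((Real.sqrt (2 * Real.pi) : ℂ))⁻¹) =
      ((Real.sqrt (2 * Real.pi) : ℂ))⁻¹ := by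
    rw [map_inv₀, Complex.conj_ofReal]
  have hconj_tsum : (starRingEnd ℂ) (∑' n, g1 a n s) =
      ∑' n, (starRingEnd ℂ) (g1 a n s) := by
    simp only [starRingEnd_apply]
    exact tsum_star
  have hnormconj : Summable fun m : ℤ => ‖(starRingEnd ℂ) (g1 a m s)‖ := by
    simp only [starRingEnd_apply, norm_star]
    exact summable_norm_g1 ha0 ha s
  have hprod : (∑' n, g2 a n s) * (∑' m, (starRingEnd ℂ) (g1 a m s)) =
      ∑' p : ℤ × ℤ, g2 a p.1 s * (starRingEnd ℂ) (g1 a p.2 s) :=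
    tsum_mul_tsum_of_summable_norm (summable_norm_g2 ha0 ha s) hnormconj
  have hP : Summable fun p : ℤ × ℤ => g2 a p.1 s * (starRingEnd ℂ) (g1 a p.2 s) :=
    ((summable_norm_g2 ha0 ha s).mul_norm hnormconj).of_norm
  set σ : ℤ × ℤ ≃ ℤ × ℤ :=
    ⟨fun p => (p.1 + p.2, p.2), fun p => (p.1 - p.2, p.2),
      fun p => by simp, fun p => by simp⟩ with hσ
  have hPσ : Summable fun p : ℤ × ℤ =>
      (1 / Complex.I) * ((Real.sqrt (2 * Real.pi) : ℂ))⁻¹ * ((Real.sqrt (2 * Real.pi) : ℂ))⁻¹ *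
        (g2 a (p.1 + p.2) s * (starRingEnd ℂ) (g1 a p.2 s)) := by
    refine Summable.mul_left _ ?_
    have := (σ.summable_iff (f := fun p : ℤ × ℤ =>
      g2 a p.1 s * (starRingEnd ℂ) (g1 a p.2 s))).mpr hP
    exact this.congr (fun p => by simp [hσ])
  calc (1 / Complex.I) * (((Real.sqrt (2 * Real.pi) : ℂ))⁻¹ * ∑' n, g2 a n s) *
        (starRingEnd ℂ) (((Real.sqrt (2 * Real.pi) : ℂ))⁻¹ * ∑' n, g1 a n s)
      = (1 / Complex.I) * ((Real.sqrt (2 * Real.pi) : ℂ))⁻¹ * ((Real.sqrt (2 * Real.pi) : ℂ))⁻¹ *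
        ((∑' n, g2 a n s) * ∑' m, (starRingEnd ℂ) (g1 a m s)) := by
        rw [map_mul, hconj_c, hconj_tsum]; ring
    _ = ∑' p : ℤ × ℤ, (1 / Complex.I) * ((Real.sqrt (2 * Real.pi) : ℂ))⁻¹ *
          ((Real.sqrt (2 * Real.pi) : ℂ))⁻¹ * (g2 a p.1 s * (starRingEnd ℂ) (g1 a p.2 s)) := by
        rw [hprod, ← tsum_mul_left]
    _ = ∑' p : ℤ × ℤ, (1 / Complex.I) * ((Real.sqrt (2 * Real.pi) : ℂ))⁻¹ *
          ((Real.sqrt (2 * Real.pi) : ℂ))⁻¹ *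
          (g2 a (p.1 + p.2) s * (starRingEnd ℂ) (g1 a p.2 s)) := by
        rw [← Equiv.tsum_eq σ (fun p : ℤ × ℤ =>
          (1 / Complex.I) * ((Real.sqrt (2 * Real.pi) : ℂ))⁻¹ *
            ((Real.sqrt (2 * Real.pi) : ℂ))⁻¹ *
            (g2 a p.1 s * (starRingEnd ℂ) (g1 a p.2 s)))]
        exact tsum_congr fun p => by simp [hσ]
    _ = ∑' n : ℤ, ∑' m : ℤ, (1 / Complex.I) * ((Real.sqrt (2 * Real.pi) : ℂ))⁻¹ *
          ((Real.sqrt (2 * Real.pi) : ℂ))⁻¹ *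
          (g2 a (n + m) s * (starRingEnd ℂ) (g1 a m s)) := Summable.tsum_prod hPσ
    _ = ∑' n : ℤ, ∑' m : ℤ,
          ((4 * Real.pi ^ 2 * (((n : ℝ) + (m : ℝ)) ^ 2 * (m : ℝ) * a m * a (n + m)) : ℝ) : ℂ) *
            Ee n s :=
        tsum_congr fun n => tsum_congr fun m => key a n m s
    _ = ∑' n : ℤ,
          ((4 * Real.pi ^ 2 *
            ∑' m : ℤ, ((n : ℝ) + (m : ℝ)) ^ 2 * (m : ℝ) * a m * a (n + m) : ℝ) : ℂ) *
            Ee n s := by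
        refine tsum_congr fun n => ?_
        rw [tsum_mul_right]
        congr 1
        rw [← Complex.ofReal_tsum, tsum_mul_left]
end
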